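/- The differential ∂ of the morphism space Mor(CFDD(𝕀), CFDD(τ)) is given on the 26 basis morphisms by: ∂(a₁) = (a₈) + (a₁₁), ∂(a₂) = (a₁₃) + (b₂), ∂(a₃) = (a₁₀), ∂(a₅) = (a₁₅), ∂(a₇) = (a₄) + (a₁₂) + (a₁₉) + (b₇), ∂(a₈) = ∂(a₁₁) = (a₆), ∂(a₉) = (a₁₇), ∂(a₁₄) = (b₆), ∂(b₁) = (a₄) + (b₇), ∂(b₃) = (a₁₂) + (a₁₃) + (a₁₉) + (b₂), ∂(b₄) = (a₁₈), ∂(b₅) = (a₁₆), and ∂ vanishes on the remaining 13 basis morphisms (a₄), (a₆), (a₁₀), (a₁₂), (a₁₃), (a₁₅), (a₁₆), (a₁₇), (a₁₈), (a₁₉), (b₂), (b₆), (b₇). -/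

import Mathlib

/-- The torus algebra: the 8-dimensional `F₂`-algebra with basis
`{ι₀, ι₁, ρ₁, ρ₂, ρ₃, ρ₁₂, ρ₂₃, ρ₁₂₃}`, encoded by its full multiplication table. -/
structure TorusAlg (A : Type) [Ring A] [Algebra (ZMod 2) A] where
  i0 : A
  i1 : A
  r1 : A
  r2 : A
  r3 : A
  r12 : A
  r23 : A
  r123 : A
  basis_indep : LinearIndependent (ZMod 2) ![i0, i1, r1, r2, r3, r12, r23, r123]
  basis_span : Submodule.span (ZMod 2)
      ({i0, i1, r1, r2, r3, r12, r23, r123} : Set A) = ⊤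
  sum_idem : i0 + i1 = 1
  i0_i0 : i0 * i0 = i0
  i1_i1 : i1 * i1 = i1
  i0_i1 : i0 * i1 = 0
  i1_i0 : i1 * i0 = 0
  i0_r1 : i0 * r1 = r1
  r1_i1 : r1 * i1 = r1
  i1_r2 : i1 * r2 = r2
  r2_i0 : r2 * i0 = r2
  i0_r3 : i0 * r3 = r3
  r3_i1 : r3 * i1 = r3
  i0_r12 : i0 * r12 = r12
  r12_i0 : r12 * i0 = r12
  i1_r23 : i1 * r23 = r23
  r23_i1 : r23 * i1 = r23
  i0_r123 : i0 * r123 = r123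
  r123_i1 : r123 * i1 = r123
  r1_r2 : r1 * r2 = r12
  r2_r3 : r2 * r3 = r23
  r1_r23 : r1 * r23 = r123
  r12_r3 : r12 * r3 = r123
  r1_r1 : r1 * r1 = 0
  r1_r3 : r1 * r3 = 0
  r1_r12 : r1 * r12 = 0
  r1_r123 : r1 * r123 = 0
  r2_r1 : r2 * r1 = 0
  r2_r2 : r2 * r2 = 0
  r2_r12 : r2 * r12 = 0
  r2_r23 : r2 * r23 = 0
  r2_r123 : r2 * r123 = 0
  r3_r1 : r3 * r1 = 0
  r3_r2 : r3 * r2 = 0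
  r3_r3 : r3 * r3 = 0
  r3_r12 : r3 * r12 = 0
  r3_r23 : r3 * r23 = 0
  r3_r123 : r3 * r123 = 0
  r12_r1 : r12 * r1 = 0
  r12_r2 : r12 * r2 = 0
  r12_r12 : r12 * r12 = 0
  r12_r23 : r12 * r23 = 0
  r12_r123 : r12 * r123 = 0
  r23_r1 : r23 * r1 = 0
  r23_r2 : r23 * r2 = 0
  r23_r3 : r23 * r3 = 0
  r23_r12 : r23 * r12 = 0
  r23_r23 : r23 * r23 = 0
  r23_r123 : r23 * r123 = 0
  r123_r1 : r123 * r1 = 0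
  r123_r2 : r123 * r2 = 0
  r123_r3 : r123 * r3 = 0
  r123_r12 : r123 * r12 = 0
  r123_r23 : r123 * r23 = 0
  r123_r123 : r123 * r123 = 0

variable {A : Type} [Ring A] [Algebra (ZMod 2) A]

/-- Composition of morphisms of type-D structures, in matrix form. -/
def matComp {ι κ σ : Type} [Fintype κ] (F : ι → κ → A) (G : κ → σ → A) :
    ι → σ → A :=
  fun i s => ∑ j, F i j * G j s

/-- The identity morphism, in matrix form. -/
def matId {ι : Type} [DecidableEq ι] : ι → ι → A :=
  fun i j => if i = j then 1 else 0

/-- The differential of a morphism of type-D structures, in matrix form: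
`∂F = F · d_N + d_M · F`. -/
def matDiff {ι κ : Type} [Fintype ι] [Fintype κ]
    (dM : ι → ι → A) (dN : κ → κ → A) (F : ι → κ → A) : ι → κ → A :=
  fun i k => (∑ j, F i j * dN j k) + (∑ j, dM i j * F j k)

/-- The type-D structure equation `(μ ⊗ id) ∘ (id ⊗ δ¹) ∘ δ¹ = 0`, in matrix form. -/
def IsTypeD {ι : Type} [Fintype ι] (d : ι → ι → A) : Prop :=
  ∀ i k, (∑ j, d i j * d j k) = 0

/-- A morphism is a chain map when its differential vanishes. -/
def IsChainMap {ι κ : Type} [Fintype ι] [Fintype κ]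
    (dM : ι → ι → A) (dN : κ → κ → A) (F : ι → κ → A) : Prop :=
  matDiff dM dN F = 0

/-- Homotopy equivalence of two type-D structures, in matrix form:
chain maps `F`, `G` with `G ∘ F + id = ∂H` and `F ∘ G + id = ∂H'`. -/
def HtpyEquiv {ι κ : Type} [Fintype ι] [Fintype κ] [DecidableEq ι] [DecidableEq κ]
    (dM : ι → ι → A) (dN : κ → κ → A) : Prop :=
  ∃ (F : ι → κ → A) (G : κ → ι → A) (H : ι → ι → A) (H' : κ → κ → A),
    IsChainMap dM dN F ∧ IsChainMap dN dM G ∧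
    matComp F G + matId = matDiff dM dM H ∧
    matComp G F + matId = matDiff dN dN H'

open scoped TensorProduct

/-- Generators `x`, `y` of `CFDD(𝕀)`. -/
inductive XY | x | y
deriving DecidableEq

instance : Fintype XY := ⟨{XY.x, XY.y}, fun a => by cases a <;> simp⟩

/-- Generators `p`, `q`, `r` of `CFDD(τ)`. -/
inductive PQR | p | q | r
deriving DecidableEq

instance : Fintype PQR := ⟨{PQR.p, PQR.q, PQR.r}, fun a => by cases a <;> simp⟩

variable (T : TorusAlg A)

/-- Designated idempotents of the generators of `CFDD(𝕀)`:
`e_x = ι₀ ⊗ ι₀`, `e_y = ι₁ ⊗ ι₁`. -/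
noncomputable def eXY : XY → (A ⊗[ZMod 2] A)
  | .x => T.i0 ⊗ₜ T.i0
  | .y => T.i1 ⊗ₜ T.i1

/-- Designated idempotents of the generators of `CFDD(τ)`:
`e_p = ι₀ ⊗ ι₀`, `e_q = ι₁ ⊗ ι₁`, `e_r = ι₁ ⊗ ι₀`. -/
noncomputable def ePQR : PQR → (A ⊗[ZMod 2] A)
  | .p => T.i0 ⊗ₜ T.i0
  | .q => T.i1 ⊗ₜ T.i1
  | .r => T.i1 ⊗ₜ T.i0

/-- The differential of `CFDD(𝕀)`:
`δ¹x = (ρ₁σ₃ + ρ₃σ₁ + ρ₁₂₃σ₁₂₃) ⊗ y`, `δ¹y = ρ₂σ₂ ⊗ x`. -/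
noncomputable def dIdd : XY → XY → (A ⊗[ZMod 2] A)
  | .x, .y => T.r1 ⊗ₜ T.r3 + T.r3 ⊗ₜ T.r1 + T.r123 ⊗ₜ T.r123
  | .y, .x => T.r2 ⊗ₜ T.r2
  | _, _ => 0

/-- The differential of `CFDD(τ)`:
`δ¹p = (ρ₁σ₃ + ρ₁₂₃σ₁₂₃) ⊗ q + ρ₃σ₁₂ ⊗ r`, `δ¹q = ρ₂₃σ₂ ⊗ r`,
`δ¹r = ρ₂ ⊗ p + σ₁ ⊗ q`. -/
noncomputable def dTau : PQR → PQR → (A ⊗[ZMod 2] A)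
  | .p, .q => T.r1 ⊗ₜ T.r3 + T.r123 ⊗ₜ T.r123
  | .p, .r => T.r3 ⊗ₜ T.r12
  | .q, .r => T.r23 ⊗ₜ T.r2
  | .r, .p => T.r2 ⊗ₜ T.i0
  | .r, .q => T.i1 ⊗ₜ T.r1
  | _, _ => 0

/-- The morphism space `Mor(CFDD(𝕀), CFDD(τ))` of idempotent-respecting linear
maps `F₂{x,y} → B ⊗ F₂{p,q,r}`, in matrix form. -/
noncomputable def MorSpace : Submodule (ZMod 2) (XY → PQR → (A ⊗[ZMod 2] A)) where
  carrier := {f | ∀ g n, eXY T g * f g n * ePQR T n = f g n}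
  add_mem' := by
    intro f g hf hg gg n
    simp only [Pi.add_apply, mul_add, add_mul, hf gg n, hg gg n]
  zero_mem' := by
    intro g n
    simp
  smul_mem' := by
    intro c f hf g n
    simp only [Pi.smul_apply, mul_smul_comm, smul_mul_assoc, hf g n]

/-- The morphism `g₀ ↦ v ⊗ n₀` (and zero on the other generator). -/
noncomputable def sgl (g₀ : XY) (n₀ : PQR) (v : A ⊗[ZMod 2] A) :
    XY → PQR → (A ⊗[ZMod 2] A) :=
  fun g n => if g = g₀ ∧ n = n₀ then v else 0

/-- The basis morphisms `(a₁), …, (a₁₉)` supported on the generator `x`. -/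
noncomputable def morA : Fin 19 → (XY → PQR → (A ⊗[ZMod 2] A)) :=
  ![sgl .x .r (T.r1 ⊗ₜ T.i0),       -- (a₁) : x ↦ ρ₁ ⊗ r
    sgl .x .r (T.r3 ⊗ₜ T.i0),       -- (a₂) : x ↦ ρ₃ ⊗ r
    sgl .x .r (T.r1 ⊗ₜ T.r12),      -- (a₃) : x ↦ ρ₁σ₁₂ ⊗ r
    sgl .x .r (T.r3 ⊗ₜ T.r12),      -- (a₄) : x ↦ ρ₃σ₁₂ ⊗ r
    sgl .x .r (T.r123 ⊗ₜ T.i0),     -- (a₅) : x ↦ ρ₁₂₃ ⊗ r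
    sgl .x .r (T.r123 ⊗ₜ T.r12),    -- (a₆) : x ↦ ρ₁₂₃σ₁₂ ⊗ r
    sgl .x .p (T.i0 ⊗ₜ T.i0),       -- (a₇) : x ↦ e_x ⊗ p
    sgl .x .p (T.r12 ⊗ₜ T.i0),      -- (a₈) : x ↦ ρ₁₂ ⊗ p
    sgl .x .p (T.i0 ⊗ₜ T.r12),      -- (a₉) : x ↦ σ₁₂ ⊗ p
    sgl .x .p (T.r12 ⊗ₜ T.r12),     -- (a₁₀) : x ↦ ρ₁₂σ₁₂ ⊗ p
    sgl .x .q (T.r1 ⊗ₜ T.r1),       -- (a₁₁) : x ↦ ρ₁σ₁ ⊗ q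
    sgl .x .q (T.r1 ⊗ₜ T.r3),       -- (a₁₂) : x ↦ ρ₁σ₃ ⊗ q
    sgl .x .q (T.r3 ⊗ₜ T.r1),       -- (a₁₃) : x ↦ ρ₃σ₁ ⊗ q
    sgl .x .q (T.r3 ⊗ₜ T.r3),       -- (a₁₄) : x ↦ ρ₃σ₃ ⊗ q
    sgl .x .q (T.r123 ⊗ₜ T.r1),     -- (a₁₅) : x ↦ ρ₁₂₃σ₁ ⊗ q
    sgl .x .q (T.r123 ⊗ₜ T.r3),     -- (a₁₆) : x ↦ ρ₁₂₃σ₃ ⊗ q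
    sgl .x .q (T.r1 ⊗ₜ T.r123),     -- (a₁₇) : x ↦ ρ₁σ₁₂₃ ⊗ q
    sgl .x .q (T.r3 ⊗ₜ T.r123),     -- (a₁₈) : x ↦ ρ₃σ₁₂₃ ⊗ q
    sgl .x .q (T.r123 ⊗ₜ T.r123)]   -- (a₁₉) : x ↦ ρ₁₂₃σ₁₂₃ ⊗ q

/-- The basis morphisms `(b₁), …, (b₇)` supported on the generator `y`. -/
noncomputable def morB : Fin 7 → (XY → PQR → (A ⊗[ZMod 2] A)) :=
  ![sgl .y .r (T.i1 ⊗ₜ T.r2),       -- (b₁) : y ↦ σ₂ ⊗ r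
    sgl .y .r (T.r23 ⊗ₜ T.r2),      -- (b₂) : y ↦ ρ₂₃σ₂ ⊗ r
    sgl .y .q (T.i1 ⊗ₜ T.i1),       -- (b₃) : y ↦ e_y ⊗ q
    sgl .y .q (T.i1 ⊗ₜ T.r23),      -- (b₄) : y ↦ σ₂₃ ⊗ q
    sgl .y .q (T.r23 ⊗ₜ T.i1),      -- (b₅) : y ↦ ρ₂₃ ⊗ q
    sgl .y .q (T.r23 ⊗ₜ T.r23),     -- (b₆) : y ↦ ρ₂₃σ₂₃ ⊗ q
    sgl .y .p (T.r2 ⊗ₜ T.r2)]       -- (b₇) : y ↦ ρ₂σ₂ ⊗ p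

/-- The differential `∂` on the morphism space:
`∂f = (μ ⊗ id) ∘ (id ⊗ δ¹_τ) ∘ f + (μ ⊗ id) ∘ (id ⊗ f) ∘ δ¹_𝕀`. -/
noncomputable def Dmor :
    (XY → PQR → (A ⊗[ZMod 2] A)) →ₗ[ZMod 2] (XY → PQR → (A ⊗[ZMod 2] A)) where
  toFun F := fun g n => (∑ j, F g j * dTau T j n) + (∑ j, dIdd T g j * F j n)
  map_add' F G := by
    funext g n
    simp only [Pi.add_apply, add_mul, mul_add, Finset.sum_add_distrib]
    abel
  map_smul' c F := by
    funext g n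
    simp only [Pi.smul_apply, smul_mul_assoc, mul_smul_comm, Finset.smul_sum,
      RingHom.id_apply, smul_add]

lemma sumPQR {M : Type*} [AddCommMonoid M] (f : PQR → M) :
    ∑ j, f j = f .p + f .q + f .r := by
  rw [show (Finset.univ : Finset PQR) = {PQR.p, PQR.q, PQR.r} from rfl]
  simp [add_assoc]

lemma sumXY {M : Type*} [AddCommMonoid M] (f : XY → M) :
    ∑ j, f j = f .x + f .y := by
  rw [show (Finset.univ : Finset XY) = {XY.x, XY.y} from rfl]
  simp

lemma char2 {M : Type*} [AddCommMonoid M] [Module (ZMod 2) M] (v : M) : v + v = 0 := by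
  have h : (2 : ZMod 2) • v = 0 := by rw [show (2:ZMod 2) = 0 from rfl, zero_smul]
  simpa [two_smul] using h

section
variable {A : Type} [Ring A] [Algebra (ZMod 2) A] (T : TorusAlg A)

lemma morA_0 : morA T 0 = sgl XY.x PQR.r (T.r1 ⊗ₜ T.i0) := rfl
lemma morA_1 : morA T 1 = sgl XY.x PQR.r (T.r3 ⊗ₜ T.i0) := rfl
lemma morA_2 : morA T 2 = sgl XY.x PQR.r (T.r1 ⊗ₜ T.r12) := rfl
lemma morA_3 : morA T 3 = sgl XY.x PQR.r (T.r3 ⊗ₜ T.r12) := rfl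
lemma morA_4 : morA T 4 = sgl XY.x PQR.r (T.r123 ⊗ₜ T.i0) := rfl
lemma morA_5 : morA T 5 = sgl XY.x PQR.r (T.r123 ⊗ₜ T.r12) := rfl
lemma morA_6 : morA T 6 = sgl XY.x PQR.p (T.i0 ⊗ₜ T.i0) := rfl
lemma morA_7 : morA T 7 = sgl XY.x PQR.p (T.r12 ⊗ₜ T.i0) := rfl
lemma morA_8 : morA T 8 = sgl XY.x PQR.p (T.i0 ⊗ₜ T.r12) := rfl
lemma morA_9 : morA T 9 = sgl XY.x PQR.p (T.r12 ⊗ₜ T.r12) := rfl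
lemma morA_10 : morA T 10 = sgl XY.x PQR.q (T.r1 ⊗ₜ T.r1) := rfl
lemma morA_11 : morA T 11 = sgl XY.x PQR.q (T.r1 ⊗ₜ T.r3) := rfl
lemma morA_12 : morA T 12 = sgl XY.x PQR.q (T.r3 ⊗ₜ T.r1) := rfl
lemma morA_13 : morA T 13 = sgl XY.x PQR.q (T.r3 ⊗ₜ T.r3) := rfl
lemma morA_14 : morA T 14 = sgl XY.x PQR.q (T.r123 ⊗ₜ T.r1) := rfl
lemma morA_15 : morA T 15 = sgl XY.x PQR.q (T.r123 ⊗ₜ T.r3) := rfl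
lemma morA_16 : morA T 16 = sgl XY.x PQR.q (T.r1 ⊗ₜ T.r123) := rfl
lemma morA_17 : morA T 17 = sgl XY.x PQR.q (T.r3 ⊗ₜ T.r123) := rfl
lemma morA_18 : morA T 18 = sgl XY.x PQR.q (T.r123 ⊗ₜ T.r123) := rfl
lemma morB_0 : morB T 0 = sgl XY.y PQR.r (T.i1 ⊗ₜ T.r2) := rfl
lemma morB_1 : morB T 1 = sgl XY.y PQR.r (T.r23 ⊗ₜ T.r2) := rfl
lemma morB_2 : morB T 2 = sgl XY.y PQR.q (T.i1 ⊗ₜ T.i1) := rfl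
lemma morB_3 : morB T 3 = sgl XY.y PQR.q (T.i1 ⊗ₜ T.r23) := rfl
lemma morB_4 : morB T 4 = sgl XY.y PQR.q (T.r23 ⊗ₜ T.i1) := rfl
lemma morB_5 : morB T 5 = sgl XY.y PQR.q (T.r23 ⊗ₜ T.r23) := rfl
lemma morB_6 : morB T 6 = sgl XY.y PQR.p (T.r2 ⊗ₜ T.r2) := rfl
end

set_option maxHeartbeats 2000000 in
theorem statement2 (A : Type) [Ring A] [Algebra (ZMod 2) A] (T : TorusAlg A) :
    Dmor T (morA T 0) = morA T 7 + morA T 10 ∧      -- ∂(a₁) = (a₈) + (a₁₁)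
    Dmor T (morA T 1) = morA T 12 + morB T 1 ∧      -- ∂(a₂) = (a₁₃) + (b₂)
    Dmor T (morA T 2) = morA T 9 ∧                  -- ∂(a₃) = (a₁₀)
    Dmor T (morA T 4) = morA T 14 ∧                 -- ∂(a₅) = (a₁₅)
    Dmor T (morA T 6) =
      morA T 3 + morA T 11 + morA T 18 + morB T 6 ∧ -- ∂(a₇) = (a₄)+(a₁₂)+(a₁₉)+(b₇)
    Dmor T (morA T 7) = morA T 5 ∧                  -- ∂(a₈) = (a₆)
    Dmor T (morA T 10) = morA T 5 ∧                 -- ∂(a₁₁) = (a₆)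
    Dmor T (morA T 8) = morA T 16 ∧                 -- ∂(a₉) = (a₁₇)
    Dmor T (morA T 13) = morB T 5 ∧                 -- ∂(a₁₄) = (b₆)
    Dmor T (morB T 0) = morA T 3 + morB T 6 ∧       -- ∂(b₁) = (a₄) + (b₇)
    Dmor T (morB T 2) =
      morA T 11 + morA T 12 + morA T 18 + morB T 1 ∧ -- ∂(b₃) = (a₁₂)+(a₁₃)+(a₁₉)+(b₂)
    Dmor T (morB T 3) = morA T 17 ∧                 -- ∂(b₄) = (a₁₈)
    Dmor T (morB T 4) = morA T 15 ∧                 -- ∂(b₅) = (a₁₆)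
    -- `∂` vanishes on the remaining 13 basis morphisms
    Dmor T (morA T 3) = 0 ∧                         -- ∂(a₄) = 0
    Dmor T (morA T 5) = 0 ∧                         -- ∂(a₆) = 0
    Dmor T (morA T 9) = 0 ∧                         -- ∂(a₁₀) = 0
    Dmor T (morA T 11) = 0 ∧                        -- ∂(a₁₂) = 0
    Dmor T (morA T 12) = 0 ∧                        -- ∂(a₁₃) = 0
    Dmor T (morA T 14) = 0 ∧                        -- ∂(a₁₅) = 0
    Dmor T (morA T 15) = 0 ∧                        -- ∂(a₁₆) = 0
    Dmor T (morA T 16) = 0 ∧                        -- ∂(a₁₇) = 0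
    Dmor T (morA T 17) = 0 ∧                        -- ∂(a₁₈) = 0
    Dmor T (morA T 18) = 0 ∧                        -- ∂(a₁₉) = 0
    Dmor T (morB T 1) = 0 ∧                         -- ∂(b₂) = 0
    Dmor T (morB T 5) = 0 ∧                         -- ∂(b₆) = 0
    Dmor T (morB T 6) = 0 := by
  refine ⟨?_, ?_, ?_, ?_, ?_, ?_, ?_, ?_, ?_, ?_, ?_, ?_, ?_, ?_, ?_, ?_, ?_, ?_, ?_, ?_, ?_, ?_, ?_, ?_, ?_, ?_⟩ <;>
  · funext g n
    cases g <;> cases n <;>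
      simp [Dmor, sgl, dTau, dIdd, sumPQR, sumXY,
        morA_0, morA_1, morA_2, morA_3, morA_4, morA_5, morA_6, morA_7, morA_8, morA_9,
        morA_10, morA_11, morA_12, morA_13, morA_14, morA_15, morA_16, morA_17, morA_18,
        morB_0, morB_1, morB_2, morB_3, morB_4, morB_5, morB_6,
        Algebra.TensorProduct.tmul_mul_tmul, add_mul, mul_add, char2,
        T.i0_i0, T.i1_i1, T.i0_i1, T.i1_i0, T.i0_r1, T.r1_i1, T.i1_r2, T.r2_i0,
        T.i0_r3, T.r3_i1, T.i0_r12, T.r12_i0, T.i1_r23, T.r23_i1, T.i0_r123, T.r123_i1,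
        T.r1_r2, T.r2_r3, T.r1_r23, T.r12_r3, T.r1_r1, T.r1_r3, T.r1_r12, T.r1_r123,
        T.r2_r1, T.r2_r2, T.r2_r12, T.r2_r23, T.r2_r123, T.r3_r1, T.r3_r2, T.r3_r3,
        T.r3_r12, T.r3_r23, T.r3_r123, T.r12_r1, T.r12_r2, T.r12_r12, T.r12_r23,
        T.r12_r123, T.r23_r1, T.r23_r2, T.r23_r3, T.r23_r12, T.r23_r23, T.r23_r123,
        T.r123_r1, T.r123_r2, T.r123_r3, T.r123_r12, T.r123_r23, T.r123_r123]
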